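/- Let Ψ : B → B be an isomorphism between two Lie algebra lifts (B,[·,·]₁) and (B,[·,·]₂) of L which induces the identity map on L = B/π^k B. Then Ψ = Id + ψ∘φ∘λ for some linear map φ : L̄ → L̄, and the corresponding difference 2-forms satisfy ⟨·,·⟩₂ = ⟨·,·⟩₁ − dφ; i.e., they are cohomologous in H²(L̄, ad). -/

import Mathlib

/-! Because `Ψ ≡ id` modulo `π^k B`, and `ψ` is an isomorphism `L̄ ≃ π^k B` (this is where
freeness of `B` enters), `Ψ - id = ψ ∘ φ ∘ λ` for a linear `φ`, which descends to `L̄` since `L̄` is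
killed by `π`. Expand `[Ψ x, Ψ y]₂ = Ψ [x, y]₁`: since `π^(2k) = 0` a bracket of two `ψ`-terms
vanishes, and `[x, ψ z]₀ = ψ [λ x, z]`, so both sides are `[x, y]₀ + ψ(…)`; cancelling `ψ` yields
`⟨u, v⟩₂ + [u, φ v] + [φ u, v] = ⟨u, v⟩₁ + φ [u, v]`, which is `⟨·,·⟩₂ = ⟨·,·⟩₁ - dφ` by
antisymmetry of the bracket. -/

open Pointwise

/-- `Rmod R π m` is the quotient ring `R/π^m R`. -/
abbrev Rmod (R : Type) [CommRing R] (π : R) (m : ℕ) : Type :=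
  R ⧸ Ideal.span {π ^ m}

section Setup

variable (R : Type) [CommRing R] (π : R) (k : ℕ)
variable (B : Type) [AddCommGroup B] [Module (Rmod R π (k + 1)) B]

/-- The image of `π` in `R_{k+1}`. -/
noncomputable abbrev pbar : Rmod R π (k + 1) := Ideal.Quotient.mk _ π

/-- The submodule `π^k B` of `B`. -/
noncomputable abbrev pikB : Submodule (Rmod R π (k + 1)) B :=
  (pbar R π k) ^ k • (⊤ : Submodule (Rmod R π (k + 1)) B)

/-- The submodule `π B` of `B`. -/
noncomputable abbrev piB : Submodule (Rmod R π (k + 1)) B :=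
  (pbar R π k) • (⊤ : Submodule (Rmod R π (k + 1)) B)

/-- `L = B/π^k B`, the reduction of `B` to a module over `R_k`. -/
noncomputable abbrev Lred := B ⧸ pikB R π k B

/-- `L̄ = B/πB`, the reduction of `B` to a vector space over the residue field. -/
noncomputable abbrev Lbar := B ⧸ piB R π k B

/-- The reduction map `mod : B → L = B/π^k B`. -/
noncomputable abbrev modk : B →ₗ[Rmod R π (k + 1)] Lred R π k B :=
  (pikB R π k B).mkQ

/-- The reduction map `λ : B → L̄ = B/πB`. -/
noncomputable abbrev lam : B →ₗ[Rmod R π (k + 1)] Lbar R π k B :=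
  (piB R π k B).mkQ

/-- `ψ : L̄ → B`, the map sending `x mod πB` to `π^k x`; its (corestriction to `π^k B`)
is the inverse of the canonical isomorphism `χ : π^k B → L̄`. -/
noncomputable def psi : Lbar R π k B →ₗ[Rmod R π (k + 1)] B :=
  Submodule.liftQ _ ((pbar R π k) ^ k • (LinearMap.id : B →ₗ[Rmod R π (k + 1)] B))
    (by
      intro x hx
      rw [← SetLike.mem_coe, Submodule.coe_pointwise_smul, Set.mem_smul_set] at hx
      obtain ⟨y, -, rfl⟩ := hx
      have h0 : (pbar R π k) ^ k * pbar R π k = 0 := by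
        rw [← pow_succ, ← map_pow, Ideal.Quotient.eq_zero_iff_mem]
        exact Ideal.mem_span_singleton_self _
      simp only [LinearMap.mem_ker, LinearMap.smul_apply, LinearMap.id_apply, smul_smul]
      rw [h0, zero_smul])

@[simp] theorem psi_apply (x : B) :
    psi R π k B (lam R π k B x) = ((pbar R π k) ^ k) • x := rfl

end Setup

theorem Module.Free.mem_smul_top_of_smul_eq_zero {A M : Type*} [CommRing A] [AddCommGroup M]
    [Module A M] [Module.Free A M] {a b : A} (hab : ∀ c, a * c = 0 → ∃ d, c = b * d) {x : M}
    (hx : a • x = 0) : x ∈ b • (⊤ : Submodule A M) := by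
  let e := Module.Free.chooseBasis A M
  choose d hd using fun i => hab (e.repr x i) (by simpa using congr(e.repr $hx i))
  rw [← e.linearCombination_repr x, Finsupp.linearCombination_apply]
  refine Submodule.sum_mem _ fun i _ => ?_
  change e.repr x i • e i ∈ _
  rw [hd i, mul_smul]
  exact Submodule.smul_mem_pointwise_smul _ _ _ trivial

section Reduction

variable {R : Type} [CommRing R] {π : R} {k : ℕ}

theorem pbar_pow_succ : pbar R π k ^ (k + 1) = 0 := by
  rw [← map_pow, Ideal.Quotient.eq_zero_iff_mem]
  exact Ideal.mem_span_singleton_self _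

theorem pbar_pow_mul_pbar_pow (hk : 1 ≤ k) : pbar R π k ^ k * pbar R π k ^ k = 0 := by
  rw [← pow_add]
  exact pow_eq_zero_of_le (by omega) pbar_pow_succ

theorem exists_eq_pbar_mul_of_pbar_pow_mul_eq_zero [IsDomain R] (hπ : π ≠ 0)
    {a : Rmod R π (k + 1)} (h : pbar R π k ^ k * a = 0) : ∃ d, a = pbar R π k * d := by
  obtain ⟨r, rfl⟩ := Ideal.Quotient.mk_surjective a
  rw [← map_pow, ← map_mul, Ideal.Quotient.eq_zero_iff_mem, Ideal.mem_span_singleton'] at h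
  obtain ⟨c, hc⟩ := h
  refine ⟨Ideal.Quotient.mk _ c, ?_⟩
  rw [← map_mul]
  congr 1
  refine mul_left_cancel₀ (pow_ne_zero k hπ) ?_
  rw [← hc]
  ring

variable {B : Type} [AddCommGroup B] [Module (Rmod R π (k + 1)) B]

theorem lam_surjective : Function.Surjective (lam R π k B) :=
  Submodule.mkQ_surjective _

theorem pbar_smul_lam (x : B) : pbar R π k • lam R π k B x = 0 := by
  rw [← map_smul, Submodule.mkQ_apply, Submodule.Quotient.mk_eq_zero]
  exact Submodule.smul_mem_pointwise_smul x _ ⊤ trivial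

theorem lam_psi (hk : 1 ≤ k) (z : Lbar R π k B) : lam R π k B (psi R π k B z) = 0 := by
  obtain ⟨x, rfl⟩ := lam_surjective z
  have hpow : pbar R π k ^ k = pbar R π k ^ (k - 1) * pbar R π k := by
    rw [← pow_succ, Nat.sub_add_cancel hk]
  rw [psi_apply, map_smul, hpow, mul_smul, pbar_smul_lam, smul_zero]

theorem lam_add_psi (hk : 1 ≤ k) (x : B) (z : Lbar R π k B) :
    lam R π k B (x + psi R π k B z) = lam R π k B x := by
  rw [map_add, lam_psi hk, add_zero]

theorem psi_injective [IsDomain R] [Module.Free (Rmod R π (k + 1)) B] (hπ : π ≠ 0) :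
    Function.Injective (psi R π k B) := by
  refine (injective_iff_map_eq_zero _).2 fun z hz => ?_
  obtain ⟨x, rfl⟩ := lam_surjective z
  rw [psi_apply] at hz
  exact (Submodule.Quotient.mk_eq_zero _).2 <| Module.Free.mem_smul_top_of_smul_eq_zero
    (fun _ => exists_eq_pbar_mul_of_pbar_pow_mul_eq_zero hπ) hz

theorem range_psi : LinearMap.range (psi R π k B) = pikB R π k B := by
  ext x
  constructor
  · rintro ⟨z, rfl⟩
    obtain ⟨y, rfl⟩ := lam_surjective z
    exact Submodule.smul_mem_pointwise_smul y _ ⊤ trivial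
  · intro hx
    obtain ⟨y, -, rfl⟩ := (Submodule.mem_smul_pointwise_iff_exists _ _ _).1 hx
    exact ⟨lam R π k B y, rfl⟩

theorem exists_eq_psi_lam (hψ : Function.Injective (psi R π k B))
    (g : B →ₗ[Rmod R π (k + 1)] B) (hg : ∀ x, g x ∈ pikB R π k B) :
    ∃ φ : Lbar R π k B →ₗ[Rmod R π (k + 1)] Lbar R π k B,
      ∀ x, g x = psi R π k B (φ (lam R π k B x)) := by
  let e := LinearEquiv.ofInjective _ hψ
  let φ₀ := e.symm.toLinearMap ∘ₗ g.codRestrict _ fun x => by rw [range_psi]; exact hg x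
  have hφ₀ : piB R π k B ≤ LinearMap.ker φ₀ := by
    intro x hx
    obtain ⟨y, -, rfl⟩ := (Submodule.mem_smul_pointwise_iff_exists _ _ _).1 hx
    obtain ⟨z, hz⟩ := lam_surjective (φ₀ y)
    rw [LinearMap.mem_ker, map_smul, ← hz, pbar_smul_lam]
  refine ⟨(piB R π k B).liftQ φ₀ hφ₀, fun x => ?_⟩
  change g x = (e (e.symm _) : B)
  rw [LinearEquiv.apply_symm_apply, LinearMap.codRestrict_apply]

end Reduction

section Brackets

variable {R : Type} [CommRing R] {π : R} {k : ℕ}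
variable {B : Type} [AddCommGroup B] [Module (Rmod R π (k + 1)) B]
variable {br0 : B →ₗ[Rmod R π (k + 1)] B →ₗ[Rmod R π (k + 1)] B}
variable {brb : Lbar R π k B →ₗ[Rmod R π (k + 1)] Lbar R π k B →ₗ[Rmod R π (k + 1)] Lbar R π k B}

theorem isAlt_of_lam_apply (halt0 : ∀ v, br0 v v = 0)
    (hbrb : ∀ x y : B, lam R π k B (br0 x y) = brb (lam R π k B x) (lam R π k B y)) :
    brb.IsAlt := by
  intro z
  obtain ⟨x, rfl⟩ := lam_surjective z
  rw [← hbrb, halt0, map_zero]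

theorem apply_psi_psi (hk : 1 ≤ k) (a b : Lbar R π k B) :
    br0 (psi R π k B a) (psi R π k B b) = 0 := by
  obtain ⟨x, rfl⟩ := lam_surjective a
  obtain ⟨y, rfl⟩ := lam_surjective b
  rw [psi_apply, psi_apply, map_smul, map_smul, LinearMap.smul_apply, smul_smul,
    pbar_pow_mul_pbar_pow hk, zero_smul]

theorem apply_psi_right
    (hbrb : ∀ x y : B, lam R π k B (br0 x y) = brb (lam R π k B x) (lam R π k B y))
    (x : B) (z : Lbar R π k B) :
    br0 x (psi R π k B z) = psi R π k B (brb (lam R π k B x) z) := by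
  obtain ⟨y, rfl⟩ := lam_surjective z
  rw [← hbrb, psi_apply, psi_apply, map_smul]

theorem apply_psi_left
    (hbrb : ∀ x y : B, lam R π k B (br0 x y) = brb (lam R π k B x) (lam R π k B y))
    (z : Lbar R π k B) (y : B) :
    br0 (psi R π k B z) y = psi R π k B (brb z (lam R π k B y)) := by
  obtain ⟨x, rfl⟩ := lam_surjective z
  rw [← hbrb, psi_apply, psi_apply, map_smul, LinearMap.smul_apply]

variable {br : B →ₗ[Rmod R π (k + 1)] B →ₗ[Rmod R π (k + 1)] B}
  {form : Lbar R π k B →ₗ[Rmod R π (k + 1)] Lbar R π k B →ₗ[Rmod R π (k + 1)] Lbar R π k B}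

theorem lam_apply_of_eq_add_psi
    (hbrb : ∀ x y : B, lam R π k B (br0 x y) = brb (lam R π k B x) (lam R π k B y))
    (hbr : ∀ x y : B, br x y = br0 x y + psi R π k B (form (lam R π k B x) (lam R π k B y)))
    (hk : 1 ≤ k) (x y : B) :
    lam R π k B (br x y) = brb (lam R π k B x) (lam R π k B y) := by
  rw [hbr, lam_add_psi hk, hbrb]

theorem apply_add_psi_add_psi
    (hbrb : ∀ x y : B, lam R π k B (br0 x y) = brb (lam R π k B x) (lam R π k B y))
    (hbr : ∀ x y : B, br x y = br0 x y + psi R π k B (form (lam R π k B x) (lam R π k B y)))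
    (hk : 1 ≤ k) (x y : B) (a b : Lbar R π k B) :
    br (x + psi R π k B a) (y + psi R π k B b) = br0 x y + psi R π k B
      (form (lam R π k B x) (lam R π k B y) + brb (lam R π k B x) b + brb a (lam R π k B y)) := by
  rw [hbr, lam_add_psi hk, lam_add_psi hk]
  simp only [map_add, LinearMap.add_apply, apply_psi_psi hk, apply_psi_right hbrb,
    apply_psi_left hbrb]
  abel

theorem form_add_brb_eq_of_map_bracket [IsDomain R] [Module.Free (Rmod R π (k + 1)) B]
    (hπ : π ≠ 0) (hk : 1 ≤ k)
    (hbrb : ∀ x y : B, lam R π k B (br0 x y) = brb (lam R π k B x) (lam R π k B y))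
    {br1 br2 : B →ₗ[Rmod R π (k + 1)] B →ₗ[Rmod R π (k + 1)] B}
    {form1 form2 : Lbar R π k B →ₗ[Rmod R π (k + 1)] Lbar R π k B →ₗ[Rmod R π (k + 1)]
      Lbar R π k B}
    (hbr1 : ∀ x y : B, br1 x y = br0 x y + psi R π k B (form1 (lam R π k B x) (lam R π k B y)))
    (hbr2 : ∀ x y : B, br2 x y = br0 x y + psi R π k B (form2 (lam R π k B x) (lam R π k B y)))
    {Ψ : B → B} (φ : Lbar R π k B →ₗ[Rmod R π (k + 1)] Lbar R π k B)
    (hΨ : ∀ x, Ψ x = x + psi R π k B (φ (lam R π k B x)))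
    (hΨbr : ∀ x y : B, br2 (Ψ x) (Ψ y) = Ψ (br1 x y)) (u v : Lbar R π k B) :
    form2 u v + brb u (φ v) + brb (φ u) v = form1 u v + φ (brb u v) := by
  obtain ⟨x, rfl⟩ := lam_surjective u
  obtain ⟨y, rfl⟩ := lam_surjective v
  have h := hΨbr x y
  rw [hΨ, hΨ, hΨ, apply_add_psi_add_psi hbrb hbr2 hk, lam_apply_of_eq_add_psi hbrb hbr1 hk,
    hbr1] at h
  apply psi_injective hπ
  apply add_left_cancel (a := br0 x y)
  rw [map_add (psi R π k B) (form1 _ _), ← add_assoc]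
  exact h

end Brackets

theorem stmt_15_general (R : Type) [CommRing R] [IsDomain R]
    (π : R) (hπ : Irreducible π) (k : ℕ) (hk : 1 ≤ k)
    (B : Type) [AddCommGroup B] [Module (Rmod R π (k + 1)) B]
    [Module.Free (Rmod R π (k + 1)) B]
    (br0 br1 br2 : B →ₗ[Rmod R π (k + 1)] B →ₗ[Rmod R π (k + 1)] B)
    (halt0 : ∀ v, br0 v v = 0)
    (brb : Lbar R π k B →ₗ[Rmod R π (k + 1)] Lbar R π k B →ₗ[Rmod R π (k + 1)] Lbar R π k B)
    (hbrb : ∀ x y : B, lam R π k B (br0 x y) = brb (lam R π k B x) (lam R π k B y))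
    (form1 form2 : Lbar R π k B →ₗ[Rmod R π (k + 1)] Lbar R π k B →ₗ[Rmod R π (k + 1)]
      Lbar R π k B)
    (hbr1 : ∀ x y : B, br1 x y = br0 x y + psi R π k B (form1 (lam R π k B x) (lam R π k B y)))
    (hbr2 : ∀ x y : B, br2 x y = br0 x y + psi R π k B (form2 (lam R π k B x) (lam R π k B y)))
    (Ψ : B ≃ₗ[Rmod R π (k + 1)] B)
    (hΨbr : ∀ x y : B, br2 (Ψ x) (Ψ y) = Ψ (br1 x y))
    (hΨid : ∀ x : B, modk R π k B (Ψ x) = modk R π k B x) :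
    ∃ φ : Lbar R π k B →ₗ[Rmod R π (k + 1)] Lbar R π k B,
      (∀ x : B, Ψ x = x + psi R π k B (φ (lam R π k B x))) ∧
      (∀ u v : Lbar R π k B,
        form2 u v = form1 u v - (-φ (brb u v) + brb u (φ v) - brb v (φ u))) := by
  obtain ⟨φ, hφ⟩ := exists_eq_psi_lam (psi_injective hπ.ne_zero)
    (Ψ.toLinearMap - LinearMap.id) fun x => (Submodule.Quotient.eq _).1 (hΨid x)
  have hΨ (x : B) : Ψ x = x + psi R π k B (φ (lam R π k B x)) := by
    rw [← hφ]
    simp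
  refine ⟨φ, hΨ, fun u v => ?_⟩
  have hcocycle := form_add_brb_eq_of_map_bracket hπ.ne_zero hk hbrb hbr1 hbr2 φ hΨ hΨbr u v
  rw [← (isAlt_of_lam_apply halt0 hbrb).neg (φ u) v]
  linear_combination (norm := abel) hcocycle

/-- If `Ψ : B → B` is an isomorphism between the two Lie algebra lifts
`(B,[·,·]₁)` and `(B,[·,·]₂)` of `L` inducing the identity on `L = B/π^k B`, then
`Ψ = Id + ψ∘φ∘λ` for some linear map `φ : L̄ → L̄`, and the difference 2-forms satisfy
`⟨·,·⟩₂ = ⟨·,·⟩₁ − dφ`; i.e. they are cohomologous in `H²(L̄, ad)`. -/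
theorem stmt_15 (R : Type) [CommRing R] [IsDomain R] [IsDiscreteValuationRing R]
    (π : R) (hπ : Irreducible π) (k : ℕ) (hk : 1 ≤ k)
    (B : Type) [AddCommGroup B] [Module (Rmod R π (k + 1)) B]
    [Module.Free (Rmod R π (k + 1)) B] [Module.Finite (Rmod R π (k + 1)) B]
    (brL : Lred R π k B →ₗ[Rmod R π (k + 1)] Lred R π k B →ₗ[Rmod R π (k + 1)] Lred R π k B)
    (haltL : ∀ v, brL v v = 0)
    (hjacL : ∀ x y z : Lred R π k B, brL (brL x y) z + brL (brL y z) x + brL (brL z x) y = 0)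
    (br0 br1 br2 : B →ₗ[Rmod R π (k + 1)] B →ₗ[Rmod R π (k + 1)] B)
    (halt0 : ∀ v, br0 v v = 0) (halt1 : ∀ v, br1 v v = 0) (halt2 : ∀ v, br2 v v = 0)
    (hjac0 : ∀ x y z : B, br0 (br0 x y) z + br0 (br0 y z) x + br0 (br0 z x) y = 0)
    (hjac1 : ∀ x y z : B, br1 (br1 x y) z + br1 (br1 y z) x + br1 (br1 z x) y = 0)
    (hjac2 : ∀ x y z : B, br2 (br2 x y) z + br2 (br2 y z) x + br2 (br2 z x) y = 0)
    (hlift0 : ∀ x y : B, modk R π k B (br0 x y) = brL (modk R π k B x) (modk R π k B y))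
    (hlift1 : ∀ x y : B, modk R π k B (br1 x y) = brL (modk R π k B x) (modk R π k B y))
    (hlift2 : ∀ x y : B, modk R π k B (br2 x y) = brL (modk R π k B x) (modk R π k B y))
    (brb : Lbar R π k B →ₗ[Rmod R π (k + 1)] Lbar R π k B →ₗ[Rmod R π (k + 1)] Lbar R π k B)
    (hbrb : ∀ x y : B, lam R π k B (br0 x y) = brb (lam R π k B x) (lam R π k B y))
    (form1 form2 : Lbar R π k B →ₗ[Rmod R π (k + 1)] Lbar R π k B →ₗ[Rmod R π (k + 1)]
      Lbar R π k B)
    (hform1alt : ∀ v, form1 v v = 0) (hform2alt : ∀ v, form2 v v = 0)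
    (hbr1 : ∀ x y : B, br1 x y = br0 x y + psi R π k B (form1 (lam R π k B x) (lam R π k B y)))
    (hbr2 : ∀ x y : B, br2 x y = br0 x y + psi R π k B (form2 (lam R π k B x) (lam R π k B y)))
    (Ψ : B ≃ₗ[Rmod R π (k + 1)] B)
    (hΨbr : ∀ x y : B, br2 (Ψ x) (Ψ y) = Ψ (br1 x y))
    (hΨid : ∀ x : B, modk R π k B (Ψ x) = modk R π k B x) :
    ∃ φ : Lbar R π k B →ₗ[Rmod R π (k + 1)] Lbar R π k B,
      (∀ x : B, Ψ x = x + psi R π k B (φ (lam R π k B x))) ∧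
      (∀ u v : Lbar R π k B,
        form2 u v = form1 u v - (-φ (brb u v) + brb u (φ v) - brb v (φ u))) :=
  stmt_15_general R π hπ k hk B br0 br1 br2 halt0 brb hbrb form1 form2 hbr1 hbr2 Ψ hΨbr hΨid
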